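/- Corrector decrease transfer: let k | n, c = C(n−1,k−1), and let Y* be a collection of positive definite k×k matrices indexed by k-subsets of [n]. Let Y_0 = {(1/c)·I_{k×k}}_{|J|=k}, let X_ℓ ≻ 0 and X_{ℓ+1} = X_ℓ^{1/2} Ψ(Y*) X_ℓ^{1/2}. Then c·(f^{SDP}(X_ℓ) − f^{SDP}(X_{ℓ+1})) ≥ f^{FW(k)}(Y_0) − f^{FW(k)}(Y*), where f^{SDP}(X) = −log det X and f^{FW(k)}(Y) = −Σ_{|J|=k} log det Y_J. -/

import Mathlib

open Matrix Finset

/-- Embed a matrix indexed by a `k`-subset `J` of `Fin n` as the principal submatrix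
indexed by `J` of an `n × n` matrix, with zeros elsewhere (the map `S ↦ S^{→n}`). -/
def Matrix.embed {n : ℕ} (J : Finset (Fin n)) (S : Matrix ↥J ↥J ℝ) :
    Matrix (Fin n) (Fin n) ℝ := fun i j =>
  if hi : i ∈ J then if hj : j ∈ J then S ⟨i, hi⟩ ⟨j, hj⟩ else 0 else 0

/-- The factor-width-`k` cone `FW_n(k)`: matrices expressible as a finite sum of
rank-one terms `x xᵀ` where each `x` has at most `k` nonzero entries. -/
def FW (n k : ℕ) : Set (Matrix (Fin n) (Fin n) ℝ) :=
  {X | ∃ (N : ℕ) (v : Fin N → (Fin n → ℝ)),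
    (∀ i, (Finset.univ.filter (fun j => v i j ≠ 0)).card ≤ k) ∧
    X = ∑ i, Matrix.vecMulVec (v i) (v i)}

/-- The old Mathlib `Matrix.PosSemidef.sqrt` (removed upstream), restated with its old definition. -/
noncomputable def Matrix.PosSemidef.sqrt {m : Type*} [Fintype m]
    [DecidableEq m] {A : Matrix m m ℝ} (hA : A.PosSemidef) : Matrix m m ℝ :=
  hA.1.eigenvectorUnitary.1 * diagonal ((√·) ∘ hA.1.eigenvalues) *
    (star hA.1.eigenvectorUnitary : Matrix m m ℝ)

/-!
Since `X_{ℓ+1} = X_ℓ^{1/2} Ψ X_ℓ^{1/2}`, the left side equals `c · log det Ψ`, so the claim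
is `log det (c⁻¹ Ψ) ≥ c⁻¹ ∑_J log det Y_J`. Write `n = k q`. A bijection
`f : [n] ≃ [k] × [q]` cuts `[n]` into `q` blocks of size `k`, and the `Y_J` over these
blocks assemble into a block-diagonal matrix `D_f` with `log det D_f = ∑ log det Y_J`.
By symmetry every `k`-set is a block equally often, which makes `c⁻¹ Ψ` the uniform
average of the `D_f`; concavity of `log det` then gives the claim.
-/

open scoped Nat

namespace Matrix

variable {m : Type*} [Fintype m] [DecidableEq m]

lemma PosSemidef.isHermitian_sqrt {A : Matrix m m ℝ} (hA : A.PosSemidef) :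
    hA.sqrt.IsHermitian := by
  rw [PosSemidef.sqrt, star_eq_conjTranspose]
  exact isHermitian_mul_mul_conjTranspose _ (isHermitian_diagonal _)

lemma PosSemidef.sqrt_mul_self {A : Matrix m m ℝ} (hA : A.PosSemidef) :
    hA.sqrt * hA.sqrt = A := by
  have hU : (star hA.1.eigenvectorUnitary : Matrix m m ℝ) * hA.1.eigenvectorUnitary.1 = 1 :=
    Unitary.coe_star_mul_self _
  have hD : diagonal ((√·) ∘ hA.1.eigenvalues) * diagonal ((√·) ∘ hA.1.eigenvalues)
      = diagonal (RCLike.ofReal ∘ hA.1.eigenvalues) := by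
    rw [diagonal_mul_diagonal]
    congr 1
    funext i
    simp [Real.mul_self_sqrt (hA.eigenvalues_nonneg i)]
  conv_rhs => rw [hA.1.spectral_theorem, Unitary.conjStarAlgAut_apply]
  rw [PosSemidef.sqrt, show ∀ U D V : Matrix m m ℝ,
      U * D * V * (U * D * V) = U * (D * (V * U) * D) * V by
    intros; simp only [Matrix.mul_assoc], hU, Matrix.mul_one, hD]

lemma PosDef.exists_conjTranspose_mul_mul_eq_one {Z : Matrix m m ℝ} (hZ : Z.PosDef) :
    ∃ T : Matrix m m ℝ, Tᴴ * Z * T = 1 := by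
  obtain ⟨R, hRh, hRR⟩ : ∃ R : Matrix m m ℝ, R.IsHermitian ∧ R * R = Z :=
    ⟨_, hZ.posSemidef.isHermitian_sqrt, hZ.posSemidef.sqrt_mul_self⟩
  have hR : IsUnit R.det := by
    rw [isUnit_iff_ne_zero]
    intro h
    have := congrArg det hRR
    rw [det_mul, h, zero_mul] at this
    exact hZ.det_pos.ne this
  refine ⟨R⁻¹, ?_⟩
  rw [conjTranspose_nonsing_inv, hRh.eq, ← hRR,
    nonsing_inv_mul_cancel_left _ _ hR, mul_nonsing_inv _ hR]

lemma PosDef.log_det_le_trace_sub_card {C : Matrix m m ℝ} (hC : C.PosDef) :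
    Real.log C.det ≤ C.trace - Fintype.card m := by
  have hev := hC.eigenvalues_pos
  rw [hC.isHermitian.det_eq_prod_eigenvalues, hC.isHermitian.trace_eq_sum_eigenvalues]
  simp only [RCLike.ofReal_real_eq_id, id_eq]
  rw [Real.log_prod fun i _ => (hev i).ne', Fintype.card_eq_sum_ones, Nat.cast_sum,
    Nat.cast_one, ← Finset.sum_sub_distrib]
  exact Finset.sum_le_sum fun i _ => Real.log_le_sub_one_of_pos (hev i)

theorem sum_mul_log_det_le_log_det_sum {ι : Type*} {s : Finset ι} {w : ι → ℝ}
    {A : ι → Matrix m m ℝ} (hw : ∀ i ∈ s, 0 < w i) (hw1 : ∑ i ∈ s, w i = 1)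
    (hA : ∀ i ∈ s, (A i).PosDef) :
    ∑ i ∈ s, w i * Real.log (A i).det ≤ Real.log (∑ i ∈ s, w i • A i).det := by
  set Z := ∑ i ∈ s, w i • A i
  have hs : s.Nonempty := Finset.nonempty_of_sum_ne_zero (by rw [hw1]; exact one_ne_zero)
  have hZ : Z.PosDef := posDef_sum hs fun i hi => (hA i hi).smul (hw i hi)
  -- Congruence by `T` turns `Z` into `1`; then `log t ≤ t - 1` on eigenvalues does the rest.
  obtain ⟨T, hT⟩ := hZ.exists_conjTranspose_mul_mul_eq_one
  have hdet : ∀ i, (Tᴴ * A i * T).det * Z.det = (A i).det := by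
    intro i
    have := congrArg det hT
    simp only [det_mul, det_one] at this ⊢
    linear_combination (A i).det * this
  have hC : ∀ i ∈ s, (Tᴴ * A i * T).PosDef := fun i hi =>
    ((hA i hi).posSemidef.conjTranspose_mul_mul_same T).posDef_iff_det_ne_zero.mpr fun h0 =>
      (hA i hi).det_pos.ne' (by rw [← hdet i, h0, zero_mul])
  have hlog : ∀ i ∈ s, Real.log (A i).det = Real.log (Tᴴ * A i * T).det + Real.log Z.det :=
    fun i hi => by rw [← hdet i, Real.log_mul (hC i hi).det_pos.ne' hZ.det_pos.ne']
  have hsumC : ∑ i ∈ s, w i • (Tᴴ * A i * T) = 1 := by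
    simp only [← hT, Z, Matrix.mul_sum, Matrix.sum_mul, Matrix.mul_smul, Matrix.smul_mul]
  calc ∑ i ∈ s, w i * Real.log (A i).det
      = ∑ i ∈ s, w i * Real.log (Tᴴ * A i * T).det + Real.log Z.det := by
        simp only [Finset.sum_congr rfl fun i hi => congrArg (w i * ·) (hlog i hi), mul_add,
          Finset.sum_add_distrib, ← Finset.sum_mul, hw1, one_mul]
    _ ≤ ∑ i ∈ s, w i * ((Tᴴ * A i * T).trace - Fintype.card m) + Real.log Z.det := by
        gcongr with i hi
        · exact (hw i hi).le
        · exact (hC i hi).log_det_le_trace_sub_card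
    _ = (∑ i ∈ s, w i • (Tᴴ * A i * T)).trace - Fintype.card m + Real.log Z.det := by
        simp [mul_sub, Finset.sum_sub_distrib, ← Finset.sum_mul, hw1, trace_sum]
    _ = Real.log Z.det := by rw [hsumC, trace_one, sub_self, zero_add]

lemma PosSemidef.det_sqrt_mul_mul_sqrt {A : Matrix m m ℝ} (hA : A.PosSemidef)
    (M : Matrix m m ℝ) :
    (hA.sqrt * M * hA.sqrt).det = A.det * M.det := by
  have h := congrArg det hA.sqrt_mul_self
  rw [det_mul] at h
  rw [det_mul, det_mul, ← h]
  ring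

lemma embed_eq_conjTranspose_mul_mul {n : ℕ} (J : Finset (Fin n)) (S : Matrix J J ℝ) :
    embed J S = ((1 : Matrix (Fin n) (Fin n) ℝ).submatrix (Subtype.val : J → Fin n) id)ᴴ * S *
      (1 : Matrix (Fin n) (Fin n) ℝ).submatrix (Subtype.val : J → Fin n) id := by
  ext x y
  by_cases hx : x ∈ J
  · by_cases hy : y ∈ J
    · lift x to J using hx
      lift y to J using hy
      simp [embed, mul_apply, one_apply]
    · have : ∀ j : J, (j : Fin n) ≠ y := fun j h => hy (h ▸ j.2)
      simp [embed, hy, mul_apply, one_apply, this]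
  · have : ∀ j : J, x ≠ j := fun j h => hx (h ▸ j.2)
    simp [embed, hx, mul_apply, one_apply, this]

lemma PosSemidef.embed {n : ℕ} {J : Finset (Fin n)} {S : Matrix J J ℝ}
    (hS : S.PosSemidef) : (Matrix.embed J S).PosSemidef := by
  rw [embed_eq_conjTranspose_mul_mul]
  exact hS.conjTranspose_mul_mul_same _

end Matrix

lemma Nat.choose_mul_eq_mul_choose_sub_one {n k : ℕ} (hk : 0 < k) :
    n.choose k * k = n * (n - 1).choose (k - 1) := by
  obtain ⟨k, rfl⟩ := Nat.exists_eq_add_of_lt hk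
  cases n with
  | zero => simp
  | succ n => simpa using (Nat.add_one_mul_choose_eq n k).symm

lemma Finset.exists_perm_map_eq {α : Type*} [DecidableEq α] {J J' : Finset α}
    (h : #J = #J') : ∃ g : Equiv.Perm α, J.map g.toEmbedding = J' := by
  have := Set.powersetCard.isPretransitive (α := α) (n := #J')
  obtain ⟨g, hg⟩ := MulAction.exists_smul_eq (Equiv.Perm α)
    (Set.powersetCard.ofCard h) (Set.powersetCard.ofCard rfl)
  refine ⟨g, ?_⟩
  simpa [Finset.map_eq_image, Finset.smul_finset_def, Equiv.Perm.smul_def] using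
    congrArg Subtype.val hg

section Partition

variable {n k q : ℕ}

def blockFinset (f : Fin n ≃ Fin k × Fin q) (i : Fin q) : Finset (Fin n) := {x | (f x).2 = i}

@[simp]
lemma mem_blockFinset {f : Fin n ≃ Fin k × Fin q} {i : Fin q} {x : Fin n} :
    x ∈ blockFinset f i ↔ (f x).2 = i := by
  simp [blockFinset]

def blockEquiv (f : Fin n ≃ Fin k × Fin q) (i : Fin q) : Fin k ≃ blockFinset f i where
  toFun j := ⟨f.symm (j, i), by simp⟩
  invFun x := (f x).1
  left_inv j := by simp
  right_inv := by
    rintro ⟨x, hx⟩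
    rw [mem_blockFinset] at hx
    ext
    simp [← hx]

@[simp]
lemma blockEquiv_apply (f : Fin n ≃ Fin k × Fin q) (i : Fin q) (j : Fin k) :
    (blockEquiv f i j : Fin n) = f.symm (j, i) := rfl

lemma card_blockFinset (f : Fin n ≃ Fin k × Fin q) (i : Fin q) : #(blockFinset f i) = k := by
  rw [← Fintype.card_coe, ← Fintype.card_congr (blockEquiv f i), Fintype.card_fin]

def blockSum (Y : (J : Finset (Fin n)) → Matrix J J ℝ) (f : Fin n ≃ Fin k × Fin q) :
    Matrix (Fin n) (Fin n) ℝ :=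
  ∑ i, embed (blockFinset f i) (Y (blockFinset f i))

lemma blockSum_eq_submatrix_blockDiagonal (Y : (J : Finset (Fin n)) → Matrix J J ℝ)
    (f : Fin n ≃ Fin k × Fin q) :
    blockSum Y f = (blockDiagonal fun i =>
      (Y (blockFinset f i)).submatrix (blockEquiv f i) (blockEquiv f i)).submatrix f f := by
  ext x y
  simp only [blockSum, Matrix.sum_apply, embed, mem_blockFinset, submatrix_apply,
    blockDiagonal_apply]
  rw [Finset.sum_eq_single (f x).2 (fun i _ hi => by simp [Ne.symm hi]) (by simp)]
  by_cases h : (f x).2 = (f y).2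
  · have hy : (f y).2 = (f x).2 := h.symm
    rw [dif_pos rfl, dif_pos hy, if_pos h]
    congr 1 <;> apply Subtype.ext
    · simp
    · simp [h]
  · simp [Ne.symm h, h]

lemma det_blockSum (Y : (J : Finset (Fin n)) → Matrix J J ℝ) (f : Fin n ≃ Fin k × Fin q) :
    (blockSum Y f).det = ∏ i, (Y (blockFinset f i)).det := by
  simp only [blockSum_eq_submatrix_blockDiagonal, det_submatrix_equiv_self, det_blockDiagonal]

lemma posDef_blockSum {Y : (J : Finset (Fin n)) → Matrix J J ℝ} {f : Fin n ≃ Fin k × Fin q}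
    (hY : ∀ i, (Y (blockFinset f i)).PosDef) : (blockSum Y f).PosDef := by
  have hpsd : (blockSum Y f).PosSemidef := posSemidef_sum _ fun i _ => (hY i).posSemidef.embed
  rw [hpsd.posDef_iff_det_ne_zero, det_blockSum]
  exact prod_ne_zero_iff.mpr fun i _ => (hY i).det_pos.ne'

lemma log_det_blockSum {Y : (J : Finset (Fin n)) → Matrix J J ℝ} {f : Fin n ≃ Fin k × Fin q}
    (hY : ∀ i, (Y (blockFinset f i)).PosDef) :
    Real.log (blockSum Y f).det = ∑ i, Real.log (Y (blockFinset f i)).det := by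
  rw [det_blockSum, Real.log_prod fun i _ => (hY i).det_pos.ne']

lemma card_filter_card_eq_choose : #{J : Finset (Fin n) | #J = k} = n.choose k := by
  simp

lemma blockFinset_symm_trans (g : Equiv.Perm (Fin n)) (f : Fin n ≃ Fin k × Fin q) (i : Fin q) :
    blockFinset (g.symm.trans f) i = (blockFinset f i).map g.toEmbedding := by
  ext x
  simp [Finset.mem_map_equiv]

lemma card_filter_blockFinset_eq_of_card_eq {J J' : Finset (Fin n)} (h : #J = #J') :
    #{p : (Fin n ≃ Fin k × Fin q) × Fin q | blockFinset p.1 p.2 = J} =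
      #{p : (Fin n ≃ Fin k × Fin q) × Fin q | blockFinset p.1 p.2 = J'} := by
  obtain ⟨g, rfl⟩ := Finset.exists_perm_map_eq h
  refine Finset.card_equiv ((Equiv.equivCongr g (Equiv.refl _)).prodCongr (Equiv.refl _))
    fun p => ?_
  simp [blockFinset_symm_trans, Equiv.equivCongr]

lemma card_filter_blockFinset_mul_choose (hk : 0 < k) (hkq : n = k * q) {J : Finset (Fin n)}
    (hJ : #J = k) :
    #{p : (Fin n ≃ Fin k × Fin q) × Fin q | blockFinset p.1 p.2 = J} * (n - 1).choose (k - 1) =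
      n ! := by
  set m := #{p : (Fin n ≃ Fin k × Fin q) × Fin q | blockFinset p.1 p.2 = J}
  have hcount : n ! * q = n.choose k * m := by
    have h := card_eq_sum_card_fiberwise (s := univ) (t := {J' : Finset (Fin n) | #J' = k})
      (f := fun p : (Fin n ≃ Fin k × Fin q) × Fin q => blockFinset p.1 p.2)
      (by simp [Set.MapsTo, card_blockFinset])
    rw [Finset.sum_congr rfl fun J' hJ' =>
      card_filter_blockFinset_eq_of_card_eq ((mem_filter.1 hJ').2.trans hJ.symm),
      sum_const, card_filter_card_eq_choose, card_univ, Fintype.card_prod,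
      Fintype.card_equiv ((finCongr hkq).trans finProdFinEquiv.symm)] at h
    simpa using h
  have hn : 0 < n := hk.trans_le (hJ ▸ (card_le_univ J).trans_eq (Fintype.card_fin n))
  refine Nat.eq_of_mul_eq_mul_left hn ?_
  calc n * (m * (n - 1).choose (k - 1)) = m * (n.choose k * k) := by
        rw [Nat.choose_mul_eq_mul_choose_sub_one hk]; ring
    _ = n * n ! := by rw [← mul_assoc, mul_comm m, ← hcount, hkq]; ring

lemma inv_factorial_smul_sum_sum_blockFinset {M : Type*} [AddCommGroup M] [Module ℝ M]
    (hk : 0 < k) (hkq : n = k * q) (F : Finset (Fin n) → M) :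
    (n ! : ℝ)⁻¹ • ∑ f : Fin n ≃ Fin k × Fin q, ∑ i, F (blockFinset f i) =
      ((n - 1).choose (k - 1) : ℝ)⁻¹ • ∑ J : Finset (Fin n) with #J = k, F J := by
  rw [← Fintype.sum_prod_type' (f := fun f i => F (blockFinset f i)),
    ← sum_fiberwise_of_maps_to (t := {J : Finset (Fin n) | #J = k})
      (g := fun p => blockFinset p.1 p.2) (by simp [card_blockFinset]), smul_sum, smul_sum]
  refine sum_congr rfl fun J hJ => ?_
  have hm := card_filter_blockFinset_mul_choose hk hkq (q := q) (mem_filter.1 hJ).2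
  rw [sum_congr rfl fun p hp => congrArg F (mem_filter.1 hp).2, sum_const,
    ← Nat.cast_smul_eq_nsmul ℝ, smul_smul]
  congr 1
  obtain ⟨hm0, hc0⟩ := mul_ne_zero_iff.1 (hm ▸ n.factorial_ne_zero)
  rw [← hm, Nat.cast_mul]
  field_simp

lemma inv_choose_smul_sum_embed_eq (hk : 0 < k) (hkq : n = k * q)
    (Y : (J : Finset (Fin n)) → Matrix J J ℝ) :
    ((n - 1).choose (k - 1) : ℝ)⁻¹ • ∑ J : Finset (Fin n) with #J = k, embed J (Y J) =
      ∑ f : Fin n ≃ Fin k × Fin q, (n ! : ℝ)⁻¹ • blockSum Y f := by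
  rw [← inv_factorial_smul_sum_sum_blockFinset hk hkq, smul_sum]
  rfl

lemma sum_inv_factorial_eq_one (hkq : n = k * q) :
    ∑ _f : Fin n ≃ Fin k × Fin q, (n ! : ℝ)⁻¹ = 1 := by
  rw [sum_const, card_univ, Fintype.card_equiv ((finCongr hkq).trans finProdFinEquiv.symm),
    Fintype.card_fin, nsmul_eq_mul, mul_inv_cancel₀ (by positivity)]

theorem posDef_inv_choose_smul_sum_embed (hk : 0 < k) (hkq : n = k * q)
    {Y : (J : Finset (Fin n)) → Matrix J J ℝ}
    (hY : ∀ J : Finset (Fin n), #J = k → (Y J).PosDef) :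
    (((n - 1).choose (k - 1) : ℝ)⁻¹ •
      ∑ J : Finset (Fin n) with #J = k, embed J (Y J)).PosDef := by
  rw [inv_choose_smul_sum_embed_eq hk hkq]
  exact posDef_sum ⟨(finCongr hkq).trans finProdFinEquiv.symm, mem_univ _⟩ fun f _ =>
    (posDef_blockSum fun i => hY _ (card_blockFinset f i)).smul (by positivity)

theorem inv_choose_mul_sum_log_det_le (hk : 0 < k) (hkq : n = k * q)
    {Y : (J : Finset (Fin n)) → Matrix J J ℝ}
    (hY : ∀ J : Finset (Fin n), #J = k → (Y J).PosDef) :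
    ((n - 1).choose (k - 1) : ℝ)⁻¹ * ∑ J : Finset (Fin n) with #J = k, Real.log (Y J).det ≤
      Real.log (((n - 1).choose (k - 1) : ℝ)⁻¹ •
        ∑ J : Finset (Fin n) with #J = k, embed J (Y J)).det := by
  rw [inv_choose_smul_sum_embed_eq hk hkq, ← smul_eq_mul,
    ← inv_factorial_smul_sum_sum_blockFinset hk hkq, smul_eq_mul, mul_sum]
  simp_rw [← log_det_blockSum fun i => hY _ (card_blockFinset _ i)]
  exact sum_mul_log_det_le_log_det_sum (fun _ _ => by positivity) (sum_inv_factorial_eq_one hkq)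
    fun f _ => posDef_blockSum fun i => hY _ (card_blockFinset f i)

lemma sum_log_det_smul_one (a : ℝ) :
    ∑ J : Finset (Fin n) with #J = k, Real.log (a • (1 : Matrix J J ℝ)).det =
      n.choose k * k * Real.log a := by
  rw [Finset.sum_congr rfl fun J hJ => by
    rw [det_smul, det_one, mul_one, Fintype.card_coe, (mem_filter.1 hJ).2, Real.log_pow]]
  rw [sum_const, card_filter_card_eq_choose, nsmul_eq_mul, mul_assoc]

end Partition

/-- corrector decrease transfer:
`c·(f^{SDP}(X_ℓ) − f^{SDP}(X_{ℓ+1})) ≥ f^{FW(k)}(Y_0) − f^{FW(k)}(Y*)`,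
where `X_{ℓ+1} = X_ℓ^{1/2} Ψ(Y*) X_ℓ^{1/2}`, `c = C(n−1,k−1)` and
`Y_0` is the collection with `Y_J = (1/c)·I`. -/
theorem corrector_decrease_transfer {n k : ℕ} (hk : 0 < k) (hdvd : k ∣ n)
    (Ystar : (J : Finset (Fin n)) → Matrix ↥J ↥J ℝ)
    (hY : ∀ J : Finset (Fin n), J.card = k → (Ystar J).PosDef)
    (Xl : Matrix (Fin n) (Fin n) ℝ) (hXl : Xl.PosDef)
    (Xnext : Matrix (Fin n) (Fin n) ℝ)
    (hXnext : Xnext = hXl.posSemidef.sqrt *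
        (∑ J ∈ Finset.univ.filter (fun J : Finset (Fin n) => J.card = k),
          Matrix.embed J (Ystar J)) * hXl.posSemidef.sqrt) :
    (Nat.choose (n - 1) (k - 1) : ℝ) *
        ((-Real.log Xl.det) - (-Real.log Xnext.det)) ≥
      (-∑ J ∈ Finset.univ.filter (fun J : Finset (Fin n) => J.card = k),
          Real.log (((Nat.choose (n - 1) (k - 1) : ℝ))⁻¹ • (1 : Matrix ↥J ↥J ℝ)).det)
      - (-∑ J ∈ Finset.univ.filter (fun J : Finset (Fin n) => J.card = k),
          Real.log (Ystar J).det) := by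
  obtain rfl | hn := n.eq_zero_or_pos
  · simp
  have hc : (0 : ℝ) < (n - 1).choose (k - 1) :=
    Nat.cast_pos.2 (Nat.choose_pos (Nat.sub_le_sub_right (Nat.le_of_dvd hn hdvd) 1))
  obtain ⟨q, hkq⟩ := hdvd
  set Ψ := ∑ J : Finset (Fin n) with #J = k, embed J (Ystar J)
  have hle := inv_choose_mul_sum_log_det_le hk hkq hY
  have hpos := (posDef_inv_choose_smul_sum_embed hk hkq hY).det_pos
  rw [det_smul, Fintype.card_fin] at hle hpos
  have hΨ : 0 < Ψ.det := pos_of_mul_pos_right hpos (by positivity)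
  rw [Real.log_mul (by positivity) hΨ.ne', Real.log_pow, Real.log_inv] at hle
  rw [hXnext, hXl.posSemidef.det_sqrt_mul_mul_sqrt, Real.log_mul hXl.det_pos.ne' hΨ.ne',
    sum_log_det_smul_one, ← Nat.cast_mul, Nat.choose_mul_eq_mul_choose_sub_one hk, Real.log_inv]
  rw [inv_mul_le_iff₀ hc] at hle
  push_cast
  linarith
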